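/- Let Γ ⊆ ℝⁿ be an n-attractor. Then the interior int Γ is an open n-set: int Γ is a non-empty open set and there exists c > 0 such that c·rⁿ ≤ |int Γ ∩ B(x,r)| for all x ∈ int Γ and all 0 < r ≤ 1. -/

import Mathlib

/-!
Every similarity of a Euclidean space is affine, so it is an open map scaling volume by `ρⁿ`.
Since `∑ ρₘⁿ = 1` and the images `sₘ(O)` are disjoint, the iterates of the Hutchinson operator
`A ↦ ⋃ₘ sₘ(A)` on the open set `O` all have the volume of `O`; they also shrink onto `Γ`.
Hence `O \ Γ` is an open null set, i.e. empty, and `O ⊆ int Γ`.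

For the density bound, given `x ∈ Γ` and a scale `t ≤ 1`, compose the maps `sₘ` along an
address of `x` until the ratio `c` of the composite `G` first drops to `≤ t`; then `c > ρ_min t`.
`G` maps `int Γ` into `int Γ` within distance `c · diam Γ` of `x`, with volume `cⁿ |int Γ|`.
-/

open Metric MeasureTheory Set Module Filter Topology
open scoped Pointwise ENNReal

def IsSimilarity {X Y : Type*} [PseudoMetricSpace X] [PseudoMetricSpace Y] (ρ : ℝ) (f : X → Y) :
    Prop :=
  ∀ x y, dist (f x) (f y) = ρ * dist x y

namespace IsSimilarity

section MetricSpace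

variable {X Y Z : Type*} [PseudoMetricSpace X] [PseudoMetricSpace Y] [PseudoMetricSpace Z]
  {ρ σ : ℝ} {f : Y → Z} {g : X → Y}

theorem id : IsSimilarity 1 (id : X → X) := fun _ _ => (one_mul _).symm

theorem comp (hf : IsSimilarity ρ f) (hg : IsSimilarity σ g) : IsSimilarity (ρ * σ) (f ∘ g) :=
  fun x y => by simp only [Function.comp_apply, hf (g x), hg x y, mul_assoc]

end MetricSpace

section InnerProductSpace

variable {E : Type*} [NormedAddCommGroup E] [InnerProductSpace ℝ E] [FiniteDimensional ℝ E]
  {ρ : ℝ} {f : E → E}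

theorem exists_linearIsometryEquiv (hf : IsSimilarity ρ f) (hρ : 0 < ρ) :
    ∃ L : E ≃ₗᵢ[ℝ] E, ∀ x, f x = ρ • L x + f 0 := by
  have hiso : Isometry fun x => ρ⁻¹ • f x := Isometry.of_dist_eq fun x y => by
    rw [dist_smul₀, hf, Real.norm_of_nonneg (inv_nonneg.2 hρ.le), inv_mul_cancel_left₀ hρ.ne']
  let A := hiso.affineIsometryOfStrictConvexSpace
  refine ⟨A.linearIsometry.toLinearIsometryEquiv rfl, fun x => ?_⟩
  have hA : A.linearIsometry x = ρ⁻¹ • f x - ρ⁻¹ • f 0 := congrFun A.toAffineMap.decomp' x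
  simp only [LinearIsometry.coe_toLinearIsometryEquiv, hA, smul_sub, smul_inv_smul₀ hρ.ne',
    sub_add_cancel]

theorem isOpenMap (hf : IsSimilarity ρ f) (hρ : 0 < ρ) : IsOpenMap f := by
  obtain ⟨L, hL⟩ := hf.exists_linearIsometryEquiv hρ
  rw [funext hL]
  exact (isOpenMap_add_right (f 0)).comp ((isOpenMap_smul₀ hρ.ne').comp L.toHomeomorph.isOpenMap)

variable [MeasurableSpace E] [BorelSpace E]

theorem volume_image (hf : IsSimilarity ρ f) (hρ : 0 < ρ) (S : Set E) :
    volume (f '' S) = ENNReal.ofReal (ρ ^ finrank ℝ E) * volume S := by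
  obtain ⟨L, hL⟩ := hf.exists_linearIsometryEquiv hρ
  have hS : f '' S = (· + f 0) '' (ρ • (L '' S)) := by
    rw [← image_smul, image_image, image_image]
    exact image_congr fun x _ => hL x
  rw [hS, image_add_right, measure_preimage_add_right, Measure.addHaar_smul,
    abs_of_pos (pow_pos hρ _), L.image_eq_preimage_symm,
    L.symm.measurePreserving.measure_preimage_emb L.symm.toHomeomorph.measurableEmbedding]

end InnerProductSpace

end IsSimilarity

def hutchinson {ι X : Type*} (s : ι → X → X) (A : Set X) : Set X :=
  ⋃ i, s i '' A

section Hutchinson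

variable {ι X : Type*} {s : ι → X → X}

theorem image_subset_hutchinson (i : ι) (A : Set X) : s i '' A ⊆ hutchinson s A :=
  subset_iUnion (fun i => s i '' A) i

theorem hutchinson_mono : Monotone (hutchinson s) :=
  fun _ _ h => iUnion_mono fun _ => image_mono h

theorem iterate_hutchinson_subset {O : Set X} (hO : hutchinson s O ⊆ O) (k : ℕ) :
    (hutchinson s)^[k] O ⊆ O := by
  induction k with
  | zero => exact subset_rfl
  | succ k ih =>
    rw [Function.iterate_succ_apply']
    exact (hutchinson_mono ih).trans hO

theorem IsOpen.iterate_hutchinson [TopologicalSpace X] (hs : ∀ i, IsOpenMap (s i))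
    {A : Set X} (hA : IsOpen A) (k : ℕ) : IsOpen ((hutchinson s)^[k] A) := by
  induction k with
  | zero => exact hA
  | succ k ih =>
    rw [Function.iterate_succ_apply']
    exact isOpen_iUnion fun i => hs i _ ih

theorem exists_comp_mem_image_of_subset_hutchinson {Γ : Set X} (hΓ : Γ ⊆ hutchinson s Γ) {G : X → X}
    {x : X} (hx : x ∈ G '' Γ) : ∃ i, x ∈ (G ∘ s i) '' Γ := by
  obtain ⟨y, hy, rfl⟩ := hx
  obtain ⟨i, z, hz, rfl⟩ := mem_iUnion.1 (hΓ hy)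
  exact ⟨i, z, hz, rfl⟩

theorem measure_hutchinson [Fintype ι] [MeasurableSpace X] {μ : Measure X} {c : ι → ℝ≥0∞}
    {A : Set X} (hdisj : Pairwise (Function.onFun Disjoint fun i => s i '' A))
    (hmeas : ∀ i, MeasurableSet (s i '' A)) (hscale : ∀ i, μ (s i '' A) = c i * μ A)
    (hc : ∑ i, c i = 1) : μ (hutchinson s A) = μ A := by
  rw [hutchinson, measure_iUnion hdisj hmeas, tsum_fintype]
  simp only [hscale, ← Finset.sum_mul, hc, one_mul]

variable [PseudoMetricSpace X] {q R : ℝ} {Γ A : Set X}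

theorem exists_dist_le_of_mem_iterate_hutchinson (hs : ∀ i x y, dist (s i x) (s i y) ≤ q * dist x y)
    (hq : 0 ≤ q) (hΓ : hutchinson s Γ ⊆ Γ) (hA : ∀ x ∈ A, ∃ z ∈ Γ, dist x z ≤ R) (k : ℕ) :
    ∀ x ∈ (hutchinson s)^[k] A, ∃ z ∈ Γ, dist x z ≤ q ^ k * R := by
  induction k with
  | zero => simpa using hA
  | succ k ih =>
    intro x hx
    rw [Function.iterate_succ_apply', hutchinson, mem_iUnion] at hx
    obtain ⟨i, y, hy, rfl⟩ := hx
    obtain ⟨z, hz, hyz⟩ := ih y hy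
    refine ⟨s i z, hΓ (image_subset_hutchinson i Γ (mem_image_of_mem _ hz)), ?_⟩
    calc dist (s i y) (s i z) ≤ q * dist y z := hs i y z
      _ ≤ q * (q ^ k * R) := mul_le_mul_of_nonneg_left hyz hq
      _ = q ^ (k + 1) * R := by ring

theorem iInter_iterate_hutchinson_subset (hs : ∀ i x y, dist (s i x) (s i y) ≤ q * dist x y)
    (hq₀ : 0 ≤ q) (hq₁ : q < 1) (hΓ : hutchinson s Γ ⊆ Γ) (hΓc : IsClosed Γ)
    (hA : ∀ x ∈ A, ∃ z ∈ Γ, dist x z ≤ R) : ⋂ k, (hutchinson s)^[k] A ⊆ Γ := by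
  intro x hx
  choose z hzΓ hz using fun k =>
    exists_dist_le_of_mem_iterate_hutchinson hs hq₀ hΓ hA k x (mem_iInter.1 hx k)
  have hlim : Tendsto (fun k => q ^ k * R) atTop (𝓝 0) := by
    simpa using (tendsto_pow_atTop_nhds_zero_of_lt_one hq₀ hq₁).mul_const R
  have hzx : Tendsto z atTop (𝓝 x) :=
    tendsto_iff_dist_tendsto_zero.2 <| squeeze_zero (fun _ => dist_nonneg)
      (fun k => (dist_comm _ _).trans_le (hz k)) hlim
  exact hΓc.mem_of_tendsto hzx (Eventually.of_forall hzΓ)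

end Hutchinson

section Attractor

variable {ι X : Type*} [PseudoMetricSpace X] {s : ι → X → X} {ρ : ι → ℝ} {qmin qmax : ℝ}
  {Γ : Set X}

theorem exists_isSimilarity_mem_image_of_hutchinson_eq (hs : ∀ i, IsSimilarity (ρ i) (s i))
    (hmin : ∀ i, qmin ≤ ρ i) (hmax : ∀ i, ρ i ≤ qmax) (hqmin : 0 < qmin) (hqmax : qmax < 1)
    (hΓ : hutchinson s Γ = Γ) {x : X} (hx : x ∈ Γ) {t : ℝ} (ht₀ : 0 < t) (ht₁ : t ≤ 1) :
    ∃ c G, IsSimilarity c G ∧ G '' Γ ⊆ Γ ∧ x ∈ G '' Γ ∧ qmin * t < c ∧ c ≤ t := by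
  have hstep : ∀ k : ℕ, ∃ c G, IsSimilarity c G ∧ G '' Γ ⊆ Γ ∧ x ∈ G '' Γ ∧ qmin * t < c ∧
      c ≤ max t (qmax ^ k) := by
    intro k
    induction k with
    | zero =>
      obtain ⟨i, -⟩ := exists_comp_mem_image_of_subset_hutchinson hΓ.ge (G := id) (by simpa)
      refine ⟨1, id, IsSimilarity.id, by simp, by simpa, ?_, by simp⟩
      nlinarith [hmin i, hmax i]
    | succ k ih =>
      obtain ⟨c, G, hG, hGΓ, hxG, hc, hck⟩ := ih
      by_cases hct : c ≤ t
      · exact ⟨c, G, hG, hGΓ, hxG, hc, hct.trans (le_max_left _ _)⟩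
      obtain ⟨i, hxi⟩ := exists_comp_mem_image_of_subset_hutchinson hΓ.ge hxG
      have hcq : c ≤ qmax ^ k := by simpa [hct] using hck
      refine ⟨c * ρ i, G ∘ s i, hG.comp (hs i), ?_, hxi, ?_, ?_⟩
      · rw [image_comp]
        exact (image_mono ((image_subset_hutchinson i Γ).trans hΓ.le)).trans hGΓ
      · nlinarith [hmin i]
      · calc c * ρ i ≤ qmax ^ k * qmax := by nlinarith [hmin i, hmax i]
          _ ≤ max t (qmax ^ (k + 1)) := by rw [← pow_succ]; exact le_max_right _ _
  obtain ⟨k, hk⟩ := exists_pow_lt_of_lt_one ht₀ hqmax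
  obtain ⟨c, G, hG, hGΓ, hxG, hc, hck⟩ := hstep k
  exact ⟨c, G, hG, hGΓ, hxG, hc, by simpa [hk.le] using hck⟩

end Attractor

section Euclidean

variable {ι E : Type*} [NormedAddCommGroup E] [InnerProductSpace ℝ E] [FiniteDimensional ℝ E]
  [MeasurableSpace E] [BorelSpace E]

theorem IsSimilarity.ofReal_pow_mul_volume_interior_le {c : ℝ} {G : E → E} {Γ : Set E}
    (hG : IsSimilarity c G) (hc : 0 < c) (hGΓ : G '' Γ ⊆ Γ) (hΓ : Bornology.IsBounded Γ)
    {x : E} (hx : x ∈ G '' Γ) :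
    ENNReal.ofReal (c ^ finrank ℝ E) * volume (interior Γ) ≤
      volume (interior Γ ∩ closedBall x (c * diam Γ)) := by
  rw [← hG.volume_image hc]
  refine measure_mono (subset_inter ?_ ?_)
  · exact interior_maximal ((image_mono interior_subset).trans hGΓ)
      (hG.isOpenMap hc _ isOpen_interior)
  · obtain ⟨z, hz, rfl⟩ := hx
    rintro _ ⟨y, hy, rfl⟩
    rw [mem_closedBall, hG]
    exact mul_le_mul_of_nonneg_left (dist_le_diam_of_mem hΓ (interior_subset hy) hz) hc.le

theorem volume_iterate_hutchinson [Fintype ι] {s : ι → E → E} {ρ : ι → ℝ} {O : Set E}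
    (hs : ∀ i, IsSimilarity (ρ i) (s i)) (hρ : ∀ i, 0 < ρ i)
    (hsum : ∑ i, ρ i ^ finrank ℝ E = 1) (hO : IsOpen O) (hOs : hutchinson s O ⊆ O)
    (hdisj : Pairwise (Function.onFun Disjoint fun i => s i '' O)) (k : ℕ) :
    volume ((hutchinson s)^[k] O) = volume O := by
  have hsub := iterate_hutchinson_subset hOs
  have hopen := hO.iterate_hutchinson fun i => (hs i).isOpenMap (hρ i)
  induction k with
  | zero => rfl
  | succ k ih =>
    rw [Function.iterate_succ_apply', ← ih]
    refine measure_hutchinson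
      (fun i j hij => (hdisj hij).mono (image_mono (hsub k)) (image_mono (hsub k)))
      (fun i => ((hs i).isOpenMap (hρ i) _ (hopen k)).measurableSet)
      (fun i => (hs i).volume_image (hρ i) _) ?_
    rw [← ENNReal.ofReal_sum_of_nonneg fun i _ => pow_nonneg (hρ i).le _, hsum,
      ENNReal.ofReal_one]

theorem subset_interior_of_openSetCondition [Fintype ι] {s : ι → E → E} {ρ : ι → ℝ}
    {Γ O : Set E} (hs : ∀ i, IsSimilarity (ρ i) (s i)) (hρ : ∀ i, ρ i ∈ Ioo 0 1)
    (hsum : ∑ i, ρ i ^ finrank ℝ E = 1) (hΓ : hutchinson s Γ ⊆ Γ) (hΓc : IsClosed Γ)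
    (hΓne : Γ.Nonempty) (hO : IsOpen O) (hOb : Bornology.IsBounded O) (hOs : hutchinson s O ⊆ O)
    (hdisj : Pairwise (Function.onFun Disjoint fun i => s i '' O)) :
    O ⊆ interior Γ := by
  have hopen := hO.iterate_hutchinson fun i => (hs i).isOpenMap (hρ i).1
  have hnull : ∀ k, volume (O \ (hutchinson s)^[k] O) = 0 := fun k =>
    (ae_eq_set.1 (ae_eq_of_subset_of_measure_ge (iterate_hutchinson_subset hOs k)
      (volume_iterate_hutchinson hs (fun i => (hρ i).1) hsum hO hOs hdisj k).ge
      (hopen k).measurableSet.nullMeasurableSet hOb.measure_lt_top.ne)).2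
  have : Nonempty ι := by
    by_contra! h
    simp at hsum
  obtain ⟨imax, himax⟩ := Finite.exists_max ρ
  obtain ⟨z, hz⟩ := hΓne
  obtain ⟨R, hR⟩ := hOb.subset_closedBall z
  have hΓO : ⋂ k, (hutchinson s)^[k] O ⊆ Γ :=
    iInter_iterate_hutchinson_subset
      (fun i x y => (hs i x y).trans_le (mul_le_mul_of_nonneg_right (himax i) dist_nonneg))
      (hρ imax).1.le (hρ imax).2 hΓ hΓc fun x hx => ⟨z, hz, hR hx⟩
  have hOΓ : O \ Γ = ∅ := by
    refine ((hO.sdiff hΓc).measure_eq_zero_iff volume).1 (measure_mono_null ?_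
      (measure_iUnion_null hnull))
    exact (sdiff_subset_sdiff_right hΓO).trans (sdiff_iInter O _).le
  exact interior_maximal (sdiff_eq_empty.1 hOΓ) hO

theorem exists_pos_ofReal_mul_pow_le_volume_interior_inter_closedBall [Finite ι]
    {s : ι → E → E} {ρ : ι → ℝ} {Γ : Set E} (hs : ∀ i, IsSimilarity (ρ i) (s i))
    (hρ : ∀ i, ρ i ∈ Ioo 0 1) (hΓ : hutchinson s Γ = Γ) (hΓb : Bornology.IsBounded Γ)
    (hint : (interior Γ).Nonempty) :
    ∃ C, 0 < C ∧ ∀ x ∈ Γ, ∀ r, 0 < r → r ≤ 1 →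
      ENNReal.ofReal (C * r ^ finrank ℝ E) ≤ volume (interior Γ ∩ closedBall x r) := by
  have : Nonempty ι := by
    obtain ⟨x, hx⟩ := hint
    obtain ⟨i, -⟩ := mem_iUnion.1 (hΓ.ge (interior_subset hx))
    exact ⟨i⟩
  obtain ⟨imin, himin⟩ := Finite.exists_min ρ
  obtain ⟨imax, himax⟩ := Finite.exists_max ρ
  set d := finrank ℝ E
  set D := diam Γ
  set V := volume (interior Γ)
  have hVfin : V ≠ ⊤ := (hΓb.subset interior_subset).measure_lt_top.ne
  have hV : 0 < V.toReal := ENNReal.toReal_pos (isOpen_interior.measure_pos _ hint).ne' hVfin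
  have hD : 0 ≤ D := diam_nonneg
  have hρmin : 0 < ρ imin := (hρ imin).1
  refine ⟨(ρ imin / (D + 1)) ^ d * V.toReal, by positivity, fun x hx r hr hr₁ => ?_⟩
  set t := r / (D + 1) with ht
  have ht₀ : 0 < t := by positivity
  have ht₁ : t ≤ 1 := (div_le_one (by positivity)).2 (by linarith)
  obtain ⟨c, G, hG, hGΓ, hxG, hc, hct⟩ := exists_isSimilarity_mem_image_of_hutchinson_eq hs himin
    himax hρmin (hρ imax).2 hΓ hx ht₀ ht₁
  have hcD : c * D ≤ r := by
    calc c * D ≤ t * (D + 1) := by nlinarith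
      _ = r := div_mul_cancel₀ r (by positivity)
  have hconst : (ρ imin / (D + 1)) ^ d * V.toReal * r ^ d = (ρ imin * t) ^ d * V.toReal := by
    rw [ht]; ring
  calc ENNReal.ofReal ((ρ imin / (D + 1)) ^ d * V.toReal * r ^ d)
      = ENNReal.ofReal ((ρ imin * t) ^ d) * V := by
        rw [hconst, ENNReal.ofReal_mul (by positivity), ENNReal.ofReal_toReal hVfin]
    _ ≤ ENNReal.ofReal (c ^ d) * V := by gcongr
    _ ≤ volume (interior Γ ∩ closedBall x (c * D)) :=
        hG.ofReal_pow_mul_volume_interior_le ((mul_pos hρmin ht₀).trans hc) hGΓ hΓb hxG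
    _ ≤ volume (interior Γ ∩ closedBall x r) := by gcongr

end Euclidean

theorem statement4_general
    (n : ℕ)
    (M : ℕ)
    (s : Fin M → EuclideanSpace ℝ (Fin n) → EuclideanSpace ℝ (Fin n))
    (ρ : Fin M → ℝ)
    (hρ : ∀ m, ρ m ∈ Set.Ioo (0 : ℝ) 1)
    (hsim : ∀ m x y, dist (s m x) (s m y) = ρ m * dist x y)
    (Γ : Set (EuclideanSpace ℝ (Fin n)))
    (hΓne : Γ.Nonempty) (hΓcomp : IsCompact Γ)
    (hattr : Γ = ⋃ m, s m '' Γ)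
    (hOSC : ∃ O : Set (EuclideanSpace ℝ (Fin n)), O.Nonempty ∧ IsOpen O ∧
      Bornology.IsBounded O ∧ (⋃ m, s m '' O) ⊆ O ∧
      ∀ m m', m ≠ m' → Disjoint (s m '' O) (s m' '' O))
    (hsum : ∑ m, ρ m ^ n = 1) :
    (interior Γ).Nonempty ∧
    ∃ c : ℝ, 0 < c ∧ ∀ x ∈ interior Γ, ∀ r : ℝ, 0 < r → r ≤ 1 →
      ENNReal.ofReal (c * r ^ n) ≤ volume (interior Γ ∩ Metric.closedBall x r) := by
  obtain ⟨O, hOne, hO, hOb, hOs, hdisj⟩ := hOSC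
  have hH : hutchinson s Γ = Γ := hattr.symm
  have hint : (interior Γ).Nonempty :=
    hOne.mono <| subset_interior_of_openSetCondition hsim hρ
      (by rwa [finrank_euclideanSpace_fin]) hH.le hΓcomp.isClosed hΓne hO hOb hOs
      fun m m' h => hdisj m m' h
  obtain ⟨c, hc, hvol⟩ :=
    exists_pos_ofReal_mul_pow_le_volume_interior_inter_closedBall hsim hρ hH hΓcomp.isBounded hint
  refine ⟨hint, c, hc, fun x hx r hr hr₁ => ?_⟩
  simpa only [finrank_euclideanSpace_fin] using hvol x (interior_subset hx) r hr hr₁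

/-- If Γ is an n-attractor then int Γ is an open n-set: int Γ is
non-empty (and open), and there exists c > 0 with c·rⁿ ≤ |int Γ ∩ B(x,r)| for
all x ∈ int Γ and 0 < r ≤ 1. -/
theorem statement4
    (n : ℕ) (hn : 1 ≤ n)
    (M : ℕ) (hM : 2 ≤ M)
    (s : Fin M → EuclideanSpace ℝ (Fin n) → EuclideanSpace ℝ (Fin n))
    (ρ : Fin M → ℝ)
    (hρ : ∀ m, ρ m ∈ Set.Ioo (0 : ℝ) 1)
    (hsim : ∀ m x y, dist (s m x) (s m y) = ρ m * dist x y)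
    (Γ : Set (EuclideanSpace ℝ (Fin n)))
    (hΓne : Γ.Nonempty) (hΓcomp : IsCompact Γ)
    (hattr : Γ = ⋃ m, s m '' Γ)
    (hOSC : ∃ O : Set (EuclideanSpace ℝ (Fin n)), O.Nonempty ∧ IsOpen O ∧
      Bornology.IsBounded O ∧ (⋃ m, s m '' O) ⊆ O ∧
      ∀ m m', m ≠ m' → Disjoint (s m '' O) (s m' '' O))
    (hsum : ∑ m, ρ m ^ n = 1) :
    (interior Γ).Nonempty ∧
    ∃ c : ℝ, 0 < c ∧ ∀ x ∈ interior Γ, ∀ r : ℝ, 0 < r → r ≤ 1 →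
      ENNReal.ofReal (c * r ^ n) ≤ volume (interior Γ ∩ Metric.closedBall x r) :=
  statement4_general n M s ρ hρ hsim Γ hΓne hΓcomp hattr hOSC hsum
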